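/- A finite poset is a p-morphic image of an n-comb for some n if and only if it is a broken m-comb for some m. -/

import Mathlib

/-! # Common framework: superintuitionistic logics, Kripke frames and models -/

/-! ## Intuitionistic propositional formulas -/

inductive Form : Type
  | var : ℕ → Form
  | bot : Form
  | top : Form
  | and : Form → Form → Form
  | or  : Form → Form → Form
  | imp : Form → Form → Form
deriving DecidableEq

namespace Form

/-- Implication depth of a formula. -/
def depth : Form → ℕ
  | var _ => 0
  | bot => 0
  | top => 0
  | and φ ψ => max φ.depth ψ.depth
  | or φ ψ => max φ.depth ψ.depth
  | imp φ ψ => max φ.depth ψ.depth + 1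

/-- All propositional variables of the formula are among `p_0, …, p_{m-1}`. -/
def varsLt (m : ℕ) : Form → Prop
  | var p => p < m
  | bot => True
  | top => True
  | and φ ψ => φ.varsLt m ∧ ψ.varsLt m
  | or φ ψ => φ.varsLt m ∧ ψ.varsLt m
  | imp φ ψ => φ.varsLt m ∧ ψ.varsLt m

/-- Uniform substitution. -/
def subst (σ : ℕ → Form) : Form → Form
  | var p => σ p
  | bot => bot
  | top => top
  | and φ ψ => and (φ.subst σ) (ψ.subst σ)
  | or φ ψ => or (φ.subst σ) (ψ.subst σ)
  | imp φ ψ => imp (φ.subst σ) (ψ.subst σ)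

/-- Biconditional. -/
def iff (φ ψ : Form) : Form := and (imp φ ψ) (imp ψ φ)

/-- Negation. -/
def neg (φ : Form) : Form := imp φ bot

end Form

/-! ## IPC and superintuitionistic logics -/

/-- A Hilbert-style axiomatization of intuitionistic propositional logic. -/
inductive IPC : Form → Prop
  | ax1 (φ ψ : Form) : IPC (.imp φ (.imp ψ φ))
  | ax2 (φ ψ χ : Form) :
      IPC (.imp (.imp φ (.imp ψ χ)) (.imp (.imp φ ψ) (.imp φ χ)))
  | andE1 (φ ψ : Form) : IPC (.imp (.and φ ψ) φ)
  | andE2 (φ ψ : Form) : IPC (.imp (.and φ ψ) ψ)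
  | andI (φ ψ : Form) : IPC (.imp φ (.imp ψ (.and φ ψ)))
  | orI1 (φ ψ : Form) : IPC (.imp φ (.or φ ψ))
  | orI2 (φ ψ : Form) : IPC (.imp ψ (.or φ ψ))
  | orE (φ ψ χ : Form) :
      IPC (.imp (.imp φ χ) (.imp (.imp ψ χ) (.imp (.or φ ψ) χ)))
  | botE (φ : Form) : IPC (.imp .bot φ)
  | topI : IPC .top
  | mp (φ ψ : Form) : IPC (.imp φ ψ) → IPC φ → IPC ψ

/-- The set of theorems of IPC. -/
def IPCSet : Set Form := {φ | IPC φ}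

/-- A superintuitionistic logic: a set of formulas containing all theorems of
IPC, closed under modus ponens and uniform substitution. -/
def IsSILogic (L : Set Form) : Prop :=
  IPCSet ⊆ L ∧
  (∀ φ ψ : Form, Form.imp φ ψ ∈ L → φ ∈ L → ψ ∈ L) ∧
  (∀ (φ : Form) (σ : ℕ → Form), φ ∈ L → φ.subst σ ∈ L)

/-- `oplus L Γ` is the least superintuitionistic logic containing `L` and `Γ`
(written `L ⊕ Γ`). -/
def oplus (L Γ : Set Form) : Set Form :=
  ⋂₀ {M : Set Form | IsSILogic M ∧ L ⊆ M ∧ Γ ⊆ M}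

/-- A logic is `n`-uniform if every formula is provably equivalent in it to a
formula of implication depth at most `n`. -/
def Uniform (L : Set Form) (n : ℕ) : Prop :=
  ∀ φ : Form, ∃ ψ : Form, ψ.depth ≤ n ∧ Form.iff φ ψ ∈ L

/-- A logic is locally tabular if over each finite tuple of variables there are
only finitely many formulas up to provable equivalence. -/
def LocallyTabular (L : Set Form) : Prop :=
  ∀ m : ℕ, ∃ Φ : Finset Form, ∀ φ : Form, φ.varsLt m → ∃ ψ ∈ Φ, Form.iff φ ψ ∈ L

/-! ## Kripke frames (posets) -/

structure Frame : Type 1 where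
  W : Type
  le : W → W → Prop
  refl : ∀ x, le x x
  trans : ∀ x y z, le x y → le y z → le x z
  antisymm : ∀ x y, le x y → le y x → x = y

namespace Frame

def lt (F : Frame) (a b : F.W) : Prop := F.le a b ∧ a ≠ b

/-- A valuation is persistent if it is preserved upwards. -/
def Persistent (F : Frame) (V : ℕ → F.W → Prop) : Prop :=
  ∀ p a b, F.le a b → V p a → V p b

/-- Kripke forcing. -/
def force (F : Frame) (V : ℕ → F.W → Prop) : Form → F.W → Prop
  | .var p, w => V p w
  | .bot, _ => False
  | .top, _ => True
  | .and φ ψ, w => F.force V φ w ∧ F.force V ψ w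
  | .or φ ψ, w => F.force V φ w ∨ F.force V ψ w
  | .imp φ ψ, w => ∀ v, F.le w v → F.force V φ v → F.force V ψ v

/-- `F ⊩ φ`. -/
def Valid (F : Frame) (φ : Form) : Prop :=
  ∀ V : ℕ → F.W → Prop, F.Persistent V → ∀ w : F.W, F.force V φ w

def Rooted (F : Frame) : Prop := ∃ r, ∀ w, F.le r w

/-- The subposet on a subset of the carrier. -/
def restrict (F : Frame) (s : Set F.W) : Frame where
  W := s
  le a b := F.le a.1 b.1
  refl a := F.refl a.1
  trans a b c h1 h2 := F.trans a.1 b.1 c.1 h1 h2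
  antisymm a b h1 h2 := Subtype.ext (F.antisymm a.1 b.1 h1 h2)

/-- The rooted upset `↑z`. -/
def up (F : Frame) (z : F.W) : Frame := F.restrict {w | F.le z w}

/-- There is a chain of `d` elements in `↑w` starting at `w`. -/
def hasChainUp (F : Frame) (w : F.W) (d : ℕ) : Prop :=
  ∃ f : Fin d → F.W, (∀ i : Fin d, (i : ℕ) = 0 → f i = w) ∧
    (∀ i j : Fin d, (i : ℕ) < (j : ℕ) → F.lt (f i) (f j))

/-- The depth of `w` is `d`: the longest chain in `↑w` has exactly `d` elements. -/
def depthEq (F : Frame) (w : F.W) (d : ℕ) : Prop :=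
  F.hasChainUp w d ∧ ¬ F.hasChainUp w (d + 1)

/-- The covering relation of the poset. -/
def covBy (F : Frame) (a b : F.W) : Prop :=
  F.lt a b ∧ ∀ c, F.lt a c → F.lt c b → False

end Frame

/-- A p-morphism of posets. -/
def IsPMorphism (P Q : Frame) (f : P.W → Q.W) : Prop :=
  (∀ a b, P.le a b → Q.le (f a) (f b)) ∧
  (∀ a b, Q.le (f a) b → ∃ a', P.le a a' ∧ f a' = b)

/-- `Q` is a p-morphic image of `P`. -/
def PMorphicImage (P Q : Frame) : Prop :=
  ∃ f : P.W → Q.W, IsPMorphism P Q f ∧ Function.Surjective f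

/-- Order isomorphism of posets. -/
def FrameIso (P Q : Frame) : Prop :=
  ∃ f : P.W → Q.W, Function.Bijective f ∧ ∀ a b, P.le a b ↔ Q.le (f a) (f b)

/-- The logic of a class of posets. -/
def LogK (K : Set Frame) : Set Form := {φ | ∀ F ∈ K, F.Valid φ}

/-- The logic of a single poset. -/
def FrameLog (F : Frame) : Set Form := {φ | F.Valid φ}

/-- `J` is a Yankov formula for the finite rooted poset `Q`: a finite poset
refutes `J` exactly when `Q` is isomorphic to a rooted upset of one of its
p-morphic images. -/
def IsYankov (J : Form) (Q : Frame) : Prop :=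
  ∀ P : Frame, Finite P.W →
    (¬ P.Valid J ↔ ∃ G : Frame, PMorphicImage P G ∧ ∃ z : G.W, FrameIso (G.up z) Q)

/-! ## Rooted Kripke models over `n` propositional variables -/

structure Model (n : ℕ) : Type 1 where
  W : Type
  le : W → W → Prop
  refl : ∀ x, le x x
  trans : ∀ x y z, le x y → le y z → le x z
  antisymm : ∀ x y, le x y → le y x → x = y
  root : W
  rooted : ∀ w, le root w
  col : W → Set (Fin n)
  mono : ∀ a b, le a b → col a ⊆ col b

namespace Model

/-- The underlying poset of a model. -/
def frame {n : ℕ} (M : Model n) : Frame :=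
  ⟨M.W, M.le, M.refl, M.trans, M.antisymm⟩

def force {n : ℕ} (M : Model n) : Form → M.W → Prop
  | .var p, w => ∃ h : p < n, (⟨p, h⟩ : Fin n) ∈ M.col w
  | .bot, _ => False
  | .top, _ => True
  | .and φ ψ, w => M.force φ w ∧ M.force ψ w
  | .or φ ψ, w => M.force φ w ∨ M.force ψ w
  | .imp φ ψ, w => ∀ v, M.le w v → M.force φ v → M.force ψ v

/-- Satisfaction at the root of the model. -/
def Sat {n : ℕ} (M : Model n) (φ : Form) : Prop := M.force φ M.root

/-- (Full) bisimilarity of two rooted models. -/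
def Bisim {n : ℕ} (M N : Model n) : Prop :=
  ∃ S : M.W → N.W → Prop,
    S M.root N.root ∧
    (∀ a b, S a b → M.col a = N.col b) ∧
    (∀ a b a', S a b → M.le a a' → ∃ b', N.le b b' ∧ S a' b') ∧
    (∀ a b b', S a b → N.le b b' → ∃ a', M.le a a' ∧ S a' b')

/-- `k`-bisimilarity of the points `x, y`, via a decreasing chain
`S k ⊆ ⋯ ⊆ S 0` of relations. -/
def NBisimAt {n : ℕ} (M N : Model n) (k : ℕ) (x : M.W) (y : N.W) : Prop :=
  ∃ S : ℕ → M.W → N.W → Prop,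
    (∀ j a b, S (j + 1) a b → S j a b) ∧
    S k x y ∧
    (∀ a b, S 0 a b → M.col a = N.col b) ∧
    (∀ j a b a', j < k → S (j + 1) a b → M.le a a' →
        ∃ b', N.le b b' ∧ S j a' b') ∧
    (∀ j a b b', j < k → S (j + 1) a b → N.le b b' →
        ∃ a', M.le a a' ∧ S j a' b')

/-- `k`-bisimilarity of two rooted models. -/
def NBisim {n : ℕ} (M N : Model n) (k : ℕ) : Prop :=
  NBisimAt M N k M.root N.root

/-- The submodel on the rooted upset `↑z`. -/
def up {n : ℕ} (M : Model n) (z : M.W) : Model n where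
  W := {w : M.W // M.le z w}
  le a b := M.le a.1 b.1
  refl a := M.refl a.1
  trans a b c h1 h2 := M.trans a.1 b.1 c.1 h1 h2
  antisymm a b h1 h2 := Subtype.ext (M.antisymm a.1 b.1 h1 h2)
  root := ⟨z, M.refl z⟩
  rooted w := w.2
  col a := M.col a.1
  mono a b h := M.mono a.1 b.1 h

/-- `(M, x) ≤ₖ (N, y)`: there is `z ≥ x` such that `(↑z, z)` is `k`-bisimilar
with `(N, y)`. -/
def LeBisim {n : ℕ} (M N : Model n) (k : ℕ) : Prop :=
  ∃ z : M.W, M.le M.root z ∧ NBisim (M.up z) N k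

/-- Two points of a model are bisimilar. -/
def PointsBisim {n : ℕ} (M : Model n) (a b : M.W) : Prop :=
  ∃ S : M.W → M.W → Prop,
    S a b ∧
    (∀ x y, S x y → M.col x = M.col y) ∧
    (∀ x y x', S x y → M.le x x' → ∃ y', M.le y y' ∧ S x' y') ∧
    (∀ x y y', S x y → M.le y y' → ∃ x', M.le x x' ∧ S x' y')

/-- A model over `n` variables is (`n`-)generated if it contains no two
distinct bisimilar points. -/
def Generated {n : ℕ} (M : Model n) : Prop :=
  ∀ a b : M.W, M.PointsBisim a b → a = b

/-- Isomorphism of models: a root-preserving, color-preserving order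
isomorphism. -/
def Iso {n : ℕ} (M N : Model n) : Prop :=
  ∃ f : M.W → N.W, Function.Bijective f ∧ f M.root = N.root ∧
    (∀ a b, M.le a b ↔ N.le (f a) (f b)) ∧ (∀ a, N.col (f a) = M.col a)

/-- `M` is a model over the class of posets `K`: its underlying poset is a
p-morphic image of a rooted upset of a member of `K`. -/
def InClass {n : ℕ} (K : Set Frame) (M : Model n) : Prop :=
  ∃ F ∈ K, ∃ z : F.W, PMorphicImage (F.up z) M.frame

/-- The model on the rooted upset `↑z` of a frame `F`, with coloring `c`. -/
def ofFrame (F : Frame) (z : F.W) (n : ℕ) (c : (F.up z).W → Set (Fin n))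
    (hc : ∀ a b : (F.up z).W, (F.up z).le a b → c a ⊆ c b) : Model n where
  W := (F.up z).W
  le := (F.up z).le
  refl := (F.up z).refl
  trans := (F.up z).trans
  antisymm := (F.up z).antisymm
  root := ⟨z, F.refl z⟩
  rooted w := w.2
  col := c
  mono := hc

end Model

/-! ## Boolean sums and stacks -/

/-- A (finite rooted) poset is a Boolean sum: it is rooted, covers decrease the
depth by exactly one, and every point of depth `k+1` lies below every point of
depth `k`. -/
def IsBooleanSum (F : Frame) : Prop :=
  F.Rooted ∧
  (∀ a b da db, F.covBy a b → F.depthEq a da → F.depthEq b db → da = db + 1) ∧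
  (∀ a b k, F.depthEq a (k + 1) → F.depthEq b k → F.le a b)

/-- `F` contains a `k`-stack: `k` consecutive layers (sets of points of equal
depth) each containing at least two points. -/
def HasStack (F : Frame) (k : ℕ) : Prop :=
  ∃ j : ℕ, ∀ i : ℕ, j ≤ i → i < j + k →
    ∃ a b : F.W, a ≠ b ∧ F.depthEq a i ∧ F.depthEq b i

/-! ## The posets Q₁, …, Q₈ -/

def q1le : Fin 4 → Fin 4 → Bool := fun a b =>
  a = b || a = 0 || (a = 1 && b = 3)
def q2le : Fin 5 → Fin 5 → Bool := fun a b =>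
  a = b || a = 0 || (a = 1 && (b = 3 || b = 4)) || (a = 2 && b = 4)
def q3le : Fin 5 → Fin 5 → Bool := fun a b =>
  a = b || a = 0 || (a = 1 && b = 4) || (a = 2 && (b = 3 || b = 4)) ||
    (a = 3 && b = 4)
def q4le : Fin 5 → Fin 5 → Bool := fun a b =>
  a = b || a = 0 || ((a = 1 || a = 2) && (b = 3 || b = 4))
def q5le : Fin 6 → Fin 6 → Bool := fun a b =>
  a = b || a = 0 || b = 5 || ((a = 1 || a = 2) && (b = 3 || b = 4))
def q6le : Fin 4 → Fin 4 → Bool := fun a b =>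
  a = b || a = 0 || b = 3
def q7le : Fin 5 → Fin 5 → Bool := fun a b =>
  a = b || a = 0 || (a = 1 && b = 3) || (a = 2 && b = 4)
def q8le : Fin 4 → Fin 4 → Bool := fun a b =>
  a = b || a = 0

/-- `Q₁`: root `0`; immediate successors `1`, `2`; `2` maximal; `3` the unique
(maximal) immediate successor of `1`. -/
def Q1f : Frame :=
  ⟨Fin 4, fun a b => q1le a b = true, by decide, by decide, by decide⟩
/-- `Q₂`: root `0`; immediate successors `1`, `2`; maximal points `3`, `4`;
`1 < 3`, `1 < 4`, `2 < 4`, `2 ≮ 3`. -/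
def Q2f : Frame :=
  ⟨Fin 5, fun a b => q2le a b = true, by decide, by decide, by decide⟩
/-- `Q₃`: root `0`; immediate successors `1`, `2`; `3` covers `2`; top `4`
with `1 < 4` and `3 < 4`. -/
def Q3f : Frame :=
  ⟨Fin 5, fun a b => q3le a b = true, by decide, by decide, by decide⟩
/-- `Q₄`: root `0`; `1`, `2` cover the root; maximal `3`, `4` above both `1`
and `2`. -/
def Q4f : Frame :=
  ⟨Fin 5, fun a b => q4le a b = true, by decide, by decide, by decide⟩
/-- `Q₅`: `Q₄` with a greatest element `5` added on top. -/
def Q5f : Frame :=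
  ⟨Fin 6, fun a b => q5le a b = true, by decide, by decide, by decide⟩
/-- `Q₆`: the diamond. -/
def Q6f : Frame :=
  ⟨Fin 4, fun a b => q6le a b = true, by decide, by decide, by decide⟩
/-- `Q₇`: root `0`; `1 < 3`, `2 < 4`, and no other strict relations above the
root. -/
def Q7f : Frame :=
  ⟨Fin 5, fun a b => q7le a b = true, by decide, by decide, by decide⟩
/-- `Q₈`: a root with three pairwise incomparable maximal points. -/
def Q8f : Frame :=
  ⟨Fin 4, fun a b => q8le a b = true, by decide, by decide, by decide⟩

/-! ## Particular logics -/

/-- The one-element poset. -/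
def unitFrame : Frame :=
  ⟨PUnit, fun _ _ => True, fun _ => trivial, fun _ _ _ _ _ => trivial,
    fun a b _ _ => Subsingleton.elim a b⟩

/-- The two-element chain. -/
def chain2 : Frame :=
  ⟨Bool, fun a b => a ≤ b, le_refl, fun _ _ _ => le_trans,
    fun _ _ => le_antisymm⟩

/-- Classical propositional logic: the logic of the one-element poset. -/
def CPC : Set Form := FrameLog unitFrame

/-- The logic of the two-element chain. -/
def Sme : Set Form := FrameLog chain2

/-- The weak Peirce law `(q → p) ∨ (((p → q) → p) → p)`. -/
def wPLax : Form :=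
  .or (.imp (.var 1) (.var 0))
    (.imp (.imp (.imp (.var 0) (.var 1)) (.var 0)) (.var 0))

/-- The logic `wPL = IPC ⊕ (q → p) ∨ (((p → q) → p) → p)`. -/
def wPL : Set Form := oplus IPCSet {wPLax}

/-- The bounded-width-2 axiom `⋁_{i≤2} (pᵢ → ⋁_{j≠i} pⱼ)`. -/
def bw2ax : Form :=
  .or (.imp (.var 0) (.or (.var 1) (.var 2)))
    (.or (.imp (.var 1) (.or (.var 0) (.var 2)))
      (.imp (.var 2) (.or (.var 0) (.var 1))))

/-- The axiom `¬p ∨ ¬¬p`. -/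
def kcax : Form := .or (Form.neg (.var 0)) (Form.neg (Form.neg (.var 0)))

/-- The logic `Box = wPL ⊕ bw₂ ⊕ (¬p ∨ ¬¬p)`. -/
def BoxLogic : Set Form := oplus wPL {bw2ax, kcax}

/-- The bounded-depth formulas. -/
def bd : ℕ → Form
  | 0 => .var 0
  | n + 1 => .or (.var (n + 1)) (.imp (.var (n + 1)) (bd n))

/-- The logic `BD_n = IPC ⊕ bd_n`. -/
def BD (n : ℕ) : Set Form := oplus IPCSet {bd n}

/-- A logic is of finite depth if it contains some `BD_n`. -/
def FiniteDepth (L : Set Form) : Prop := ∃ n, BD n ⊆ L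

/-! ## The Rieger–Nishimura ladder -/

/-- Points of the Rieger–Nishimura ladder: `inl k = L_k`, `inr k = R_k`. -/
abbrev RNpt : Type := ℕ ⊕ ℕ

/-- The covering relation of the Rieger–Nishimura ladder (`rnCov a b` means
`a ⋖ b`, i.e. `b` is an immediate successor of `a`). -/
inductive rnCov : RNpt → RNpt → Prop
  | ll (k : ℕ) : rnCov (.inl (k + 1)) (.inl k)
  | rr (k : ℕ) : rnCov (.inr (k + 1)) (.inr k)
  | rl (k : ℕ) : rnCov (.inr (k + 1)) (.inl k)
  | lr (k : ℕ) : rnCov (.inl (k + 2)) (.inr k)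

private def rnIdx : RNpt → ℕ
  | .inl k => 2 * k
  | .inr k => 2 * k + 1

private theorem rnCov_idx {a b : RNpt} (h : rnCov a b) : rnIdx b < rnIdx a := by
  cases h <;> simp [rnIdx] <;> omega

private theorem rnLe_idx {a b : RNpt} (h : Relation.ReflTransGen rnCov a b) :
    rnIdx b ≤ rnIdx a := by
  induction h with
  | refl => exact le_rfl
  | tail _ h₂ ih => exact le_trans (le_of_lt (rnCov_idx h₂)) ih

private theorem rnIdx_inj {a b : RNpt} (h : rnIdx a = rnIdx b) : a = b := by
  rcases a with a | a <;> rcases b with b | b <;> simp [rnIdx] at h ⊢ <;> omega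

/-- The Rieger–Nishimura ladder as a poset: the order is the reflexive
transitive closure of the covering relation. -/
def RN : Frame where
  W := RNpt
  le a b := Relation.ReflTransGen rnCov a b
  refl _ := Relation.ReflTransGen.refl
  trans _ _ _ h1 h2 := h1.trans h2
  antisymm _ _ h1 h2 := rnIdx_inj (le_antisymm (rnLe_idx h2) (rnLe_idx h1))

/-! ## Combs -/

def combLe (n : ℕ) : (Fin n ⊕ Fin n) → (Fin n ⊕ Fin n) → Prop
  | .inl i, .inl j => i ≤ j
  | .inl i, .inr j => i ≤ j
  | .inr i, .inr j => i = j
  | .inr _, .inl _ => False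

/-- The `n`-comb: base points `x_1 ≤ … ≤ x_n` (encoded `inl 0, …, inl (n-1)`)
and maximal teeth `y_1, …, y_n` (encoded `inr 0, …, inr (n-1)`), with
`x_i ≤ y_j ↔ i ≤ j` and the teeth pairwise incomparable. -/
def Comb (n : ℕ) : Frame where
  W := Fin n ⊕ Fin n
  le := combLe n
  refl := by rintro (i | i) <;> simp [combLe]
  trans := by
    rintro (i | i) (j | j) (k | k) h1 h2 <;> simp only [combLe] at * <;>
      first
        | exact le_trans h1 h2
        | exact h2 ▸ h1
  antisymm := by
    rintro (i | i) (j | j) h1 h2 <;> simp only [combLe] at * <;>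
      first
        | exact congrArg Sum.inl (le_antisymm h1 h2)
        | exact congrArg Sum.inr h1

/-- A broken `m`-comb: (isomorphic to) a subposet of the `m`-comb containing
all of the base points `x_1, …, x_m`. -/
def IsBrokenComb (F : Frame) (m : ℕ) : Prop :=
  ∃ s : Set (Comb m).W, (∀ i : Fin m, Sum.inl i ∈ s) ∧
    FrameIso F ((Comb m).restrict s)

/-- The logic of the class of all combs. -/
def LFC : Set Form := LogK {F | ∃ n, F = Comb n}

/-! ## The stacked models `M_n^k` and `N_n^k` -/

/-- Height index of a point: layer `j` (from the top) has index `j`, the root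
(`none`) has index `k+1`. -/
def stackIdx (k : ℕ) : Option (Fin (k + 1) × Bool) → ℕ
  | none => k + 1
  | some (j, _) => j

/-- Size of the color (an initial segment of the variables): the left point
(`false`) of layer `j` gets `1^{n-j}0^j`, the right point (`true`) gets
`1^{n-j-1}0^{j+1}`, and the root gets `1^r0^{n-r}`. -/
def stackColSize (n k r : ℕ) : Option (Fin (k + 1) × Bool) → ℕ
  | none => r
  | some (j, false) => n - j
  | some (j, true) => n - ((j : ℕ) + 1)

private theorem stackColSize_le (n k r : ℕ) (hr : r ≤ n - (k + 1))
    {a b : Option (Fin (k + 1) × Bool)} (h : stackIdx k b < stackIdx k a) :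
    stackColSize n k r a ≤ stackColSize n k r b := by
  rcases a with _ | ⟨j, _ | _⟩ <;> rcases b with _ | ⟨j', _ | _⟩ <;>
    simp only [stackIdx, stackColSize] at * <;> omega

/-- The common shape of `M_n^k` and `N_n^k`, with root color `1^r0^{n-r}`:
`k+1` layers of two points stacked on top of a root. -/
def stackModel (n k r : ℕ) (hr : r ≤ n - (k + 1)) : Model n where
  W := Option (Fin (k + 1) × Bool)
  le a b := a = b ∨ stackIdx k b < stackIdx k a
  refl _ := Or.inl rfl
  trans := by
    rintro a b c (rfl | h1) h2
    · exact h2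
    · rcases h2 with rfl | h2
      · exact Or.inr h1
      · exact Or.inr (h2.trans h1)
  antisymm := by
    rintro a b (rfl | h1) h2
    · rfl
    · rcases h2 with rfl | h2
      · rfl
      · omega
  root := none
  rooted := by
    rintro (_ | ⟨j, s⟩)
    · exact Or.inl rfl
    · exact Or.inr j.isLt
  col a := {i : Fin n | (i : ℕ) < stackColSize n k r a}
  mono := by
    rintro a b (rfl | h) i hi
    · exact hi
    · exact lt_of_lt_of_le hi (stackColSize_le n k r hr h)

/-- The model `M_n^k` (root color `1^{n-k-1}0^{k+1}`). -/
def Mmodel (n k : ℕ) : Model n := stackModel n k (n - (k + 1)) le_rfl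

/-- The model `N_n^k` (root color `1^{n-k-2}0^{k+2}`). -/
def Nmodel (n k : ℕ) : Model n := stackModel n k (n - (k + 2)) (by omega)

/-! ## The frames `S_n` -/

/-- Height index in `S_n`: the top point (`some none`) has index `0`, the two
points of the `j`-th middle layer have index `j+1`, and the root (`none`) has
index `n`. -/
def sIdx (n : ℕ) : Option (Option (Fin (n - 1) × Bool)) → ℕ
  | none => n
  | some none => 0
  | some (some (j, _)) => (j : ℕ) + 1

/-- The frame `S_n` (for `n ≥ 2`): the Boolean sum whose layers from top to
bottom have sizes `1, 2, …, 2, 1` (with `n - 1` layers of size `2`). -/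
def SFrame (n : ℕ) : Frame where
  W := Option (Option (Fin (n - 1) × Bool))
  le a b := a = b ∨ sIdx n b < sIdx n a
  refl _ := Or.inl rfl
  trans := by
    rintro a b c (rfl | h1) h2
    · exact h2
    · rcases h2 with rfl | h2
      · exact Or.inr h1
      · exact Or.inr (h2.trans h1)
  antisymm := by
    rintro a b (rfl | h1) h2
    · rfl
    · rcases h2 with rfl | h2
      · rfl
      · omega

/-! Collapsing the dropped teeth of a broken `m`-comb onto its top point is a p-morphism from the
`m`-comb. Conversely, let `f` be a p-morphism from an `n`-comb onto `F`. The image `B` of the base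
points is a chain, and every other point is the image of a tooth, hence maximal. Place each point
`w` at height `below B w`, the number of elements of `B` under it. Two teeth at the height of some
`b ∈ B` coincide: both are the image of `y_i` for the last `i` with `f x_i = b`. So sending the
`j`-th element of `B` to `x_j` and a tooth at height `j` to `y_j` embeds `F` into the `|B|`-comb,
with all base points in the image. -/

instance (F : Frame) : Std.Refl F.le := ⟨F.refl⟩

theorem PMorphicImage.of_frameIso {P F G : Frame} (h : PMorphicImage P G) (hiso : FrameIso F G) :
    PMorphicImage P F := by
  obtain ⟨g, hg, hg_le⟩ := hiso
  obtain ⟨φ, ⟨hmono, hback⟩, hsurj⟩ := h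
  let e := Equiv.ofBijective g hg
  have he : ∀ x, g (e.symm x) = x := e.apply_symm_apply
  refine ⟨e.symm ∘ φ, ⟨fun a b hab => ?_, fun a b hab => ?_⟩, e.symm.surjective.comp hsurj⟩
  · rw [hg_le, Function.comp_apply, Function.comp_apply, he, he]
    exact hmono a b hab
  · rw [hg_le, Function.comp_apply, he] at hab
    obtain ⟨a', ha', hφ⟩ := hback a (g b) hab
    exact ⟨a', ha', by rw [Function.comp_apply, hφ]; exact e.symm_apply_apply b⟩

theorem frameIso_restrict_range {F G : Frame} (Ψ : F.W → G.W)
    (hΨ : ∀ a b, F.le a b ↔ G.le (Ψ a) (Ψ b)) : FrameIso F (G.restrict (Set.range Ψ)) := by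
  refine ⟨Set.rangeFactorization Ψ, ⟨fun a b hab => ?_, Set.rangeFactorization_surjective⟩, hΨ⟩
  have h : Ψ a = Ψ b := congrArg Subtype.val hab
  exact F.antisymm a b ((hΨ a b).2 (h ▸ G.refl _)) ((hΨ b a).2 (h ▸ G.refl _))

section BrokenComb

open scoped Classical

variable {m : ℕ} {s : Set (Fin m ⊕ Fin m)}

/-- `i` only witnesses `0 < m`. -/
def Fin.lastOf (i : Fin m) : Fin m := ⟨m - 1, Nat.sub_lt i.pos Nat.one_pos⟩

theorem Fin.le_lastOf (j i : Fin m) : j ≤ Fin.lastOf i :=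
  Nat.le_sub_one_of_lt j.isLt

noncomputable def combTop (s : Set (Fin m ⊕ Fin m)) (i : Fin m) : Fin m ⊕ Fin m :=
  if .inr (Fin.lastOf i) ∈ s then .inr (Fin.lastOf i) else .inl (Fin.lastOf i)

theorem combTop_mem (hs : ∀ i, .inl i ∈ s) (i : Fin m) : combTop s i ∈ s := by
  unfold combTop
  split_ifs with h
  exacts [h, hs _]

theorem combLe_inl_combTop (j i : Fin m) : combLe m (.inl j) (combTop s i) := by
  unfold combTop
  split_ifs <;> exact Fin.le_lastOf j i

theorem eq_combTop_of_combLe {i : Fin m} {b : Fin m ⊕ Fin m} (hb : b ∈ s)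
    (h : combLe m (combTop s i) b) : b = combTop s i := by
  unfold combTop at *
  split_ifs at * with htop
  · rcases b with j | j <;> simp_all [combLe]
  · rcases b with j | j <;> simp only [combLe] at h
    · rw [le_antisymm (Fin.le_lastOf j i) h]
    · rw [le_antisymm (Fin.le_lastOf j i) h] at hb
      exact absurd hb htop

noncomputable def combRetract (s : Set (Fin m ⊕ Fin m)) : Fin m ⊕ Fin m → Fin m ⊕ Fin m
  | .inl i => .inl i
  | .inr i => if .inr i ∈ s then .inr i else combTop s i

theorem combRetract_mem (hs : ∀ i, .inl i ∈ s) (a : Fin m ⊕ Fin m) : combRetract s a ∈ s := by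
  rcases a with i | i
  · exact hs i
  · simp only [combRetract]
    split_ifs with h
    exacts [h, combTop_mem hs i]

theorem combRetract_of_mem {a : Fin m ⊕ Fin m} (ha : a ∈ s) : combRetract s a = a := by
  rcases a with i | i
  · rfl
  · exact if_pos ha

theorem combLe_combRetract {a b : Fin m ⊕ Fin m} (h : combLe m a b) :
    combLe m (combRetract s a) (combRetract s b) := by
  rcases a with i | i <;> rcases b with j | j <;> simp only [combLe] at h
  · exact h
  · simp only [combRetract]
    split_ifs
    exacts [h, combLe_inl_combTop i j]
  · rw [h]
    exact (Comb m).refl _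

theorem eq_combRetract_of_combLe {i : Fin m} {b : Fin m ⊕ Fin m} (hb : b ∈ s)
    (h : combLe m (combRetract s (.inr i)) b) : b = combRetract s (.inr i) := by
  simp only [combRetract] at *
  split_ifs at * with hi
  · rcases b with j | j <;> simp_all [combLe]
  · exact eq_combTop_of_combLe hb h

theorem pMorphicImage_comb_restrict (hs : ∀ i, .inl i ∈ s) :
    PMorphicImage (Comb m) ((Comb m).restrict s) := by
  refine ⟨fun a => ⟨combRetract s a, combRetract_mem hs a⟩, ⟨fun a b h => combLe_combRetract h,
    ?_⟩, fun b => ⟨b.1, Subtype.ext (combRetract_of_mem b.2)⟩⟩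
  rintro (i | i) ⟨b, hb⟩ h
  · exact ⟨b, by rcases b with j | j <;> exact h, Subtype.ext (combRetract_of_mem hb)⟩
  · exact ⟨.inr i, (Comb m).refl _, Subtype.ext (eq_combRetract_of_combLe hb h).symm⟩

end BrokenComb

namespace Frame

open scoped Classical

variable (F : Frame) (B : Finset F.W)

noncomputable def below (w : F.W) : ℕ := (B.filter (F.le · w)).card

variable {F B}

theorem below_mono {v w : F.W} (h : F.le v w) : F.below B v ≤ F.below B w :=
  Finset.card_le_card (Finset.monotone_filter_right B fun _ _ hb => F.trans _ _ _ hb h)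

theorem below_le_card (w : F.W) : F.below B w ≤ B.card :=
  Finset.card_le_card (Finset.filter_subset _ _)

theorem one_le_below {b w : F.W} (hb : b ∈ B) (h : F.le b w) : 1 ≤ F.below B w :=
  Finset.card_pos.2 ⟨b, Finset.mem_filter.2 ⟨hb, h⟩⟩

theorem le_iff_below_le (hB : IsChain F.le (B : Set F.W)) {b : F.W} (hb : b ∈ B) (w : F.W) :
    F.le b w ↔ F.below B b ≤ F.below B w := by
  refine ⟨below_mono, fun h => ?_⟩
  by_contra hbw
  have hsub : B.filter (F.le · w) ⊂ B.filter (F.le · b) := by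
    refine Finset.ssubset_iff_of_subset (fun c hc => ?_) |>.2
      ⟨b, Finset.mem_filter.2 ⟨hb, F.refl b⟩, fun hb' => hbw (Finset.mem_filter.1 hb').2⟩
    obtain ⟨hcB, hcw⟩ := Finset.mem_filter.1 hc
    refine Finset.mem_filter.2 ⟨hcB, (hB.total hcB hb).resolve_right fun hbc => ?_⟩
    exact hbw (F.trans _ _ _ hbc hcw)
  exact (Finset.card_lt_card hsub).not_ge h

theorem eq_of_below_eq (hB : IsChain F.le (B : Set F.W)) {b b' : F.W} (hb : b ∈ B)
    (hb' : b' ∈ B) (h : F.below B b = F.below B b') : b = b' :=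
  F.antisymm _ _ ((le_iff_below_le hB hb b').2 h.le) ((le_iff_below_le hB hb' b).2 h.ge)

theorem exists_below_eq (hB : IsChain F.le (B : Set F.W)) {j : ℕ} (hj : 1 ≤ j)
    (hjB : j ≤ B.card) : ∃ b ∈ B, F.below B b = j := by
  have himage : B.image (F.below B) = Finset.Icc 1 B.card := by
    refine Finset.eq_of_subset_of_card_le (fun k hk => ?_) ?_
    · obtain ⟨b, hb, rfl⟩ := Finset.mem_image.1 hk
      exact Finset.mem_Icc.2 ⟨one_le_below hb (F.refl b), below_le_card b⟩
    · rw [Nat.card_Icc, Finset.card_image_of_injOn fun b hb b' hb' => eq_of_below_eq hB hb hb']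
      omega
  have hjmem : j ∈ B.image (F.below B) := himage ▸ Finset.mem_Icc.2 ⟨hj, hjB⟩
  simpa using hjmem

end Frame

open scoped Classical in
theorem isBrokenComb_of_isChain {F : Frame} {B : Finset F.W} (hB : IsChain F.le (B : Set F.W))
    (hbot : ∀ w, ∃ b ∈ B, F.le b w) (hmax : ∀ w ∉ B, ∀ v, F.le w v → v = w)
    (hteeth : ∀ t ∉ B, ∀ t' ∉ B, F.below B t = F.below B t' → t = t') :
    IsBrokenComb F B.card := by
  have hpos : ∀ w, 1 ≤ F.below B w := fun w =>
    let ⟨_, hb, hbw⟩ := hbot w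
    Frame.one_le_below hb hbw
  let height (w : F.W) : Fin B.card :=
    ⟨F.below B w - 1, by have := hpos w; have := Frame.below_le_card (B := B) w; omega⟩
  have height_le (w w' : F.W) : height w ≤ height w' ↔ F.below B w ≤ F.below B w' := by
    have := hpos w; have := hpos w'
    change F.below B w - 1 ≤ F.below B w' - 1 ↔ _
    omega
  have height_inj (w w' : F.W) : height w = height w' ↔ F.below B w = F.below B w' := by
    have := hpos w; have := hpos w'
    rw [Fin.ext_iff]
    change F.below B w - 1 = F.below B w' - 1 ↔ _
    omega
  let Ψ (w : F.W) : (Comb B.card).W := if w ∈ B then .inl (height w) else .inr (height w)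
  have hΨ (w w' : F.W) : F.le w w' ↔ (Comb B.card).le (Ψ w) (Ψ w') := by
    by_cases hw : w ∈ B <;> by_cases hw' : w' ∈ B <;> simp only [Ψ, hw, hw', ↓reduceIte]
    · exact (Frame.le_iff_below_le hB hw w').trans (height_le w w').symm
    · exact (Frame.le_iff_below_le hB hw w').trans (height_le w w').symm
    · exact ⟨fun h => hw (hmax w hw w' h ▸ hw'), False.elim⟩
    · refine ⟨fun h => by rw [hmax w hw w' h]; exact (Comb _).refl _, fun h => ?_⟩
      rw [hteeth w hw w' hw' ((height_inj w w').1 h)]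
      exact F.refl w'
  refine ⟨Set.range Ψ, fun i => ?_, frameIso_restrict_range Ψ hΨ⟩
  obtain ⟨b, hb, hbi⟩ := Frame.exists_below_eq hB (j := i + 1) (by omega) i.isLt
  exact ⟨b, by simp only [Ψ, hb, ↓reduceIte, height, hbi]; rfl⟩

section CombImage

open scoped Classical

variable {n : ℕ} {F : Frame} {f : (Comb n).W → F.W}

noncomputable def baseImage (f : (Comb n).W → F.W) : Finset F.W :=
  Finset.univ.image fun i => f (.inl i)

theorem mem_baseImage (i : Fin n) : f (.inl i) ∈ baseImage f :=
  Finset.mem_image_of_mem _ (Finset.mem_univ i)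

theorem isChain_baseImage (hf : IsPMorphism (Comb n) F f) :
    IsChain F.le (baseImage f : Set F.W) := by
  rintro _ hb _ hb' -
  obtain ⟨i, -, rfl⟩ := Finset.mem_image.1 hb
  obtain ⟨j, -, rfl⟩ := Finset.mem_image.1 hb'
  exact (le_total i j).imp (hf.1 (.inl i) (.inl j)) (hf.1 (.inl j) (.inl i))

theorem exists_baseImage_le (hf : IsPMorphism (Comb n) F f) (hsurj : Function.Surjective f)
    (w : F.W) : ∃ b ∈ baseImage f, F.le b w := by
  obtain ⟨a | a, rfl⟩ := hsurj w <;>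
    exact ⟨_, mem_baseImage ⟨0, a.pos⟩, hf.1 _ _ (Nat.zero_le a)⟩

theorem eq_of_le_of_notMem_baseImage (hf : IsPMorphism (Comb n) F f)
    (hsurj : Function.Surjective f) {w : F.W} (hw : w ∉ baseImage f) {v : F.W} (h : F.le w v) :
    v = w := by
  obtain ⟨i | i, rfl⟩ := hsurj w
  · exact absurd (mem_baseImage i) hw
  · obtain ⟨j | j, hij, rfl⟩ := hf.2 _ v h
    · exact hij.elim
    · rw [show i = j from hij]

theorem eq_tooth_of_below_eq (hf : IsPMorphism (Comb n) F f) {i : Fin n}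
    (hlast : ∀ j, f (.inl j) = f (.inl i) → j ≤ i) {u : F.W} (hu : u ∉ baseImage f)
    (hiu : F.le (f (.inl i)) u)
    (hbelow : F.below (baseImage f) u ≤ F.below (baseImage f) (f (.inl i))) :
    u = f (.inr i) := by
  obtain ⟨j | j, hij, rfl⟩ := hf.2 _ u hiu
  · exact absurd (mem_baseImage j) hu
  have hij : i ≤ j := hij
  have hji : F.le (f (.inl j)) (f (.inl i)) := by
    rw [Frame.le_iff_below_le (isChain_baseImage hf) (mem_baseImage j)]
    exact (Frame.below_mono (hf.1 (.inl j) (.inr j) le_rfl)).trans hbelow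
  rw [le_antisymm hij (hlast j (F.antisymm _ _ hji (hf.1 (.inl i) (.inl j) hij)))]

theorem isBrokenComb_of_pMorphism (hf : IsPMorphism (Comb n) F f)
    (hsurj : Function.Surjective f) : IsBrokenComb F (baseImage f).card := by
  have hB := isChain_baseImage hf
  refine isBrokenComb_of_isChain hB (exists_baseImage_le hf hsurj)
    (fun w hw v => eq_of_le_of_notMem_baseImage hf hsurj hw) fun t ht t' ht' htt' => ?_
  obtain ⟨b, hb, hbt⟩ := Frame.exists_below_eq hB
    (let ⟨_, hc, hct⟩ := exists_baseImage_le hf hsurj t; Frame.one_le_below hc hct)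
    (Frame.below_le_card t)
  obtain ⟨i, hi, hlast⟩ := (Finset.univ.filter fun j => f (.inl j) = b).exists_max_image id
    (by simpa [baseImage, Finset.filter_nonempty_iff] using hb)
  obtain rfl : f (.inl i) = b := (Finset.mem_filter.1 hi).2
  replace hlast : ∀ j, f (.inl j) = f (.inl i) → j ≤ i := fun j hj =>
    hlast j (Finset.mem_filter.2 ⟨Finset.mem_univ j, hj⟩)
  have tooth {u : F.W} (hu : u ∉ baseImage f)
      (hbu : F.below (baseImage f) u = F.below (baseImage f) t) : u = f (.inr i) :=
    eq_tooth_of_below_eq hf hlast hu ((Frame.le_iff_below_le hB hb u).2 (hbt.trans hbu.symm).le)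
      (hbu.trans hbt.symm).le
  rw [tooth ht rfl, tooth ht' htt'.symm]

end CombImage

theorem statement10_general (F : Frame) :
    (∃ n, PMorphicImage (Comb n) F) ↔ ∃ m, IsBrokenComb F m := by
  constructor
  · rintro ⟨n, f, hf, hsurj⟩
    exact ⟨_, isBrokenComb_of_pMorphism hf hsurj⟩
  · rintro ⟨m, s, hs, hiso⟩
    exact ⟨m, (pMorphicImage_comb_restrict hs).of_frameIso hiso⟩

/-- A finite poset is a p-morphic image of an `n`-comb for
some `n` iff it is a broken `m`-comb for some `m`. -/
theorem statement10 (F : Frame) (hF : Finite F.W) :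
    (∃ n, PMorphicImage (Comb n) F) ↔ ∃ m, IsBrokenComb F m :=
  statement10_general F
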